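/- arXiv:1806.05514 — 2 statements merged into one kernel-verified Lean document; each statement's English description precedes it below -/
import Mathlib

section
/- Let N ≥ 4, let D^X, D^Y be N×N real matrices each with maximum entry 1, and let K̂^X = J − D^X, K̂^Y = J − D^Y. Let C^X, C^Y denote the U-centered matrices of D^X, D^Y and Ĉ^X, Ĉ^Y those of K̂^X, K̂^Y. Then the unbiased sample HSIC equals the unbiased sample distance covariance plus an explicit remainder: (1/(N(N−3)))·trace(Ĉ^X·Ĉ^Y) = (1/(N(N−3)))·trace(C^X·C^Y) + [ (N−1)·trace(C^X·(J−I)) + (N−1)·trace(C^Y·(J−I)) + trace((J−I)²) ] / (N·(N−1)²·(N−3)). -/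
/-- The U-centered matrix of an `N × N` real matrix `D`: for `i ≠ j`,
`C i j = D i j - (1/(N-2)) ∑_t D i t - (1/(N-2)) ∑_s D s j + (1/((N-1)(N-2))) ∑_{s,t} D s t`,
and `C i i = 0`. -/
noncomputable def uCenter {N : ℕ} (D : Matrix (Fin N) (Fin N) ℝ) :
    Matrix (Fin N) (Fin N) ℝ :=
  Matrix.of fun i j =>
    if i = j then 0
    else
      D i j - ((N : ℝ) - 2)⁻¹ * ∑ t, D i t - ((N : ℝ) - 2)⁻¹ * ∑ s, D s j +
        (((N : ℝ) - 1) * ((N : ℝ) - 2))⁻¹ * ∑ s, ∑ t, D s t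

/-!
U-centering is linear and sends the all-ones matrix `J` to `-(N-1)⁻¹ (J - I)`, so the U-centered
induced kernel is `Ĉ = -(C + (N-1)⁻¹ (J - I))`; expanding `trace (Ĉˣ Ĉʸ)` bilinearly yields the
remainder term.
-/

open Matrix

lemma uCenter_sub {N : ℕ} (A B : Matrix (Fin N) (Fin N) ℝ) :
    uCenter (A - B) = uCenter A - uCenter B := by
  ext i j
  simp only [uCenter, of_apply, Matrix.sub_apply, Finset.sum_sub_distrib]
  split_ifs <;> ring

lemma uCenter_allOnes {N : ℕ} (hN : 3 ≤ N) :
    uCenter (of fun _ _ => (1 : ℝ) : Matrix (Fin N) (Fin N) ℝ) =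
      -((N : ℝ) - 1)⁻¹ • (of (fun _ _ => (1 : ℝ)) - 1) := by
  have hN' : (3 : ℝ) ≤ N := by exact_mod_cast hN
  have h1 : (N : ℝ) - 1 ≠ 0 := by linarith
  have h2 : (N : ℝ) - 2 ≠ 0 := by linarith
  ext i j
  by_cases hij : i = j
  · simp [uCenter, hij]
  · simp only [uCenter, of_apply, hij, if_false, Finset.sum_const, Finset.card_univ,
      Fintype.card_fin, nsmul_eq_mul, mul_one, Matrix.smul_apply, Matrix.sub_apply, one_apply_ne hij,
      smul_eq_mul]
    field_simp
    ring

lemma uCenter_allOnes_sub {N : ℕ} (hN : 3 ≤ N) (D : Matrix (Fin N) (Fin N) ℝ) :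
    uCenter (of (fun _ _ => (1 : ℝ)) - D) =
      -(uCenter D + ((N : ℝ) - 1)⁻¹ • (of (fun _ _ => (1 : ℝ)) - 1)) := by
  rw [uCenter_sub, uCenter_allOnes hN, neg_smul]
  abel

lemma trace_add_smul_mul_add_smul {n R : Type*} [Fintype n] [CommRing R]
    (A B E : Matrix n n R) (c : R) :
    ((A + c • E) * (B + c • E)).trace =
      (A * B).trace + c * (A * E).trace + c * (B * E).trace + c ^ 2 * (E * E).trace := by
  simp only [add_mul, mul_add, smul_mul, Matrix.mul_smul, trace_add, trace_smul, smul_eq_mul,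
    trace_mul_comm E B]
  ring

theorem stmt_15_general (N : ℕ) (hN : 4 ≤ N) (DX DY : Matrix (Fin N) (Fin N) ℝ) :
    let J : Matrix (Fin N) (Fin N) ℝ := Matrix.of fun _ _ => 1
    let KX : Matrix (Fin N) (Fin N) ℝ := J - DX
    let KY : Matrix (Fin N) (Fin N) ℝ := J - DY
    let CX := uCenter DX
    let CY := uCenter DY
    let CXhat := uCenter KX
    let CYhat := uCenter KY
    ((N : ℝ) * ((N : ℝ) - 3))⁻¹ * (CXhat * CYhat).trace =
      ((N : ℝ) * ((N : ℝ) - 3))⁻¹ * (CX * CY).trace +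
        (((N : ℝ) - 1) * (CX * (J - 1)).trace +
          ((N : ℝ) - 1) * (CY * (J - 1)).trace +
          ((J - 1) * (J - 1)).trace) /
          ((N : ℝ) * ((N : ℝ) - 1) ^ 2 * ((N : ℝ) - 3)) := by
  intro J KX KY CX CY CXhat CYhat
  have hN' : (4 : ℝ) ≤ N := by exact_mod_cast hN
  have h1 : (N : ℝ) - 1 ≠ 0 := by linarith
  have h3 : (N : ℝ) - 3 ≠ 0 := by linarith
  have hX : CXhat = -(CX + ((N : ℝ) - 1)⁻¹ • (J - 1)) := uCenter_allOnes_sub (by omega) DX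
  have hY : CYhat = -(CY + ((N : ℝ) - 1)⁻¹ • (J - 1)) := uCenter_allOnes_sub (by omega) DY
  rw [hX, hY, neg_mul_neg, trace_add_smul_mul_add_smul]
  field_simp
  ring

/-- For `N ≥ 4`, matrices `DX, DY` with maximum entry `1`, induced kernel
matrices `K̂X = J - DX`, `K̂Y = J - DY`, and U-centered matrices `CX, CY, ĈX, ĈY`, the
unbiased sample HSIC equals the unbiased sample distance covariance plus the explicit
remainder `((N-1)·tr(CX(J-I)) + (N-1)·tr(CY(J-I)) + tr((J-I)²)) / (N(N-1)²(N-3))`. -/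
theorem stmt_15 (N : ℕ) (hN : 4 ≤ N) (DX DY : Matrix (Fin N) (Fin N) ℝ)
    (hmX : IsGreatest {r : ℝ | ∃ i j : Fin N, DX i j = r} 1)
    (hmY : IsGreatest {r : ℝ | ∃ i j : Fin N, DY i j = r} 1) :
    let J : Matrix (Fin N) (Fin N) ℝ := Matrix.of fun _ _ => 1
    let KX : Matrix (Fin N) (Fin N) ℝ := J - DX
    let KY : Matrix (Fin N) (Fin N) ℝ := J - DY
    let CX := uCenter DX
    let CY := uCenter DY
    let CXhat := uCenter KX
    let CYhat := uCenter KY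
    ((N : ℝ) * ((N : ℝ) - 3))⁻¹ * (CXhat * CYhat).trace =
      ((N : ℝ) * ((N : ℝ) - 3))⁻¹ * (CX * CY).trace +
        (((N : ℝ) - 1) * (CX * (J - 1)).trace +
          ((N : ℝ) - 1) * (CY * (J - 1)).trace +
          ((J - 1) * (J - 1)).trace) /
          ((N : ℝ) * ((N : ℝ) - 1) ^ 2 * ((N : ℝ) - 3)) :=
  stmt_15_general N hN DX DY
end

section
/- Let K^X, K^Y be N×N real kernel matrices and let a, b ∈ ℝ be arbitrary scalars (in particular a and b may be the maximum entries of K^X and K^Y, defining the bijective induced distance matrices a·J − K^X and b·J − K^Y). Then trace(H·(a·J − K^X)·H·H·(b·J − K^Y)·H) = trace(H·K^X·H·H·K^Y·H), where H = I − (1/N)J; i.e., the maximum elements always cancel, so the sample distance covariance computed from the bijective induced metric equals the sample HSIC regardless of the (possibly growing) maximum elements. -/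
/-! The centring matrix `H = I - J / N` annihilates the all-ones matrix `J`, so the constant
parts `a • J`, `b • J` of the induced distance matrices vanish after double centring:
`H (a J - K) H = -(H K H)`. The two signs cancel in the product, before the trace is even taken. -/

namespace Matrix

variable {n R : Type*} [Fintype n]

theorem of_one_mul_of_one [Semiring R] :
    (of fun _ _ => 1 : Matrix n n R) * of (fun _ _ => 1) =
      (Fintype.card n : R) • of fun _ _ => 1 := by
  ext i j
  simp [mul_apply]

theorem centering_mul_of_one [DecidableEq n] [DivisionRing R] [CharZero R] :
    (1 - (Fintype.card n : R)⁻¹ • of fun _ _ => 1 : Matrix n n R) * of (fun _ _ => 1) = 0 := by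
  cases isEmpty_or_nonempty n
  · exact Subsingleton.elim _ _
  · have hcard : (Fintype.card n : R) ≠ 0 := Nat.cast_ne_zero.mpr Fintype.card_ne_zero
    rw [sub_mul, one_mul, smul_mul, of_one_mul_of_one, smul_smul, inv_mul_cancel₀ hcard,
      one_smul, sub_self]

theorem mul_smul_sub_mul_of_mul_eq_zero [CommRing R] {H J : Matrix n n R} (hHJ : H * J = 0)
    (c : R) (A H' : Matrix n n R) : H * (c • J - A) * H' = -(H * A * H') := by
  rw [mul_sub, Matrix.mul_smul, hHJ, smul_zero, zero_sub, neg_mul]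

end Matrix

theorem stmt_18_general (N : ℕ) (KX KY : Matrix (Fin N) (Fin N) ℝ) (a b : ℝ) :
    let J : Matrix (Fin N) (Fin N) ℝ := Matrix.of fun _ _ => 1
    let H : Matrix (Fin N) (Fin N) ℝ := 1 - (N : ℝ)⁻¹ • J
    (H * (a • J - KX) * H * (H * (b • J - KY) * H)).trace =
      (H * KX * H * (H * KY * H)).trace := by
  intro J H
  have hHJ : H * J = 0 := by
    simpa only [Fintype.card_fin] using Matrix.centering_mul_of_one (n := Fin N) (R := ℝ)
  rw [Matrix.mul_smul_sub_mul_of_mul_eq_zero hHJ, Matrix.mul_smul_sub_mul_of_mul_eq_zero hHJ,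
    neg_mul_neg]

/-- For `N × N` kernel matrices `KX, KY` and arbitrary scalars `a, b`
(in particular the maximum entries defining the bijective induced distance matrices
`a·J - KX`, `b·J - KY`), the maximum elements always cancel:
`trace(H·(a·J - KX)·H·H·(b·J - KY)·H) = trace(H·KX·H·H·KY·H)`. -/
theorem stmt_18 (N : ℕ) (hN : 0 < N) (KX KY : Matrix (Fin N) (Fin N) ℝ) (a b : ℝ) :
    let J : Matrix (Fin N) (Fin N) ℝ := Matrix.of fun _ _ => 1
    let H : Matrix (Fin N) (Fin N) ℝ := 1 - (N : ℝ)⁻¹ • J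
    (H * (a • J - KX) * H * (H * (b • J - KY) * H)).trace =
      (H * KX * H * (H * KY * H)).trace :=
  stmt_18_general N KX KY a b
end
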